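/- The upper triangular compatible matrix Ω with entries ω_{ii} = 1, ω_{ij} = 0 for j < i, and ω_{ij} = Σ_{v=2}^{j-i+1} (-1)^{v-1} Σ_{increasing chains i = k_1 < k_2 < … < k_v = j} Π_{s=1}^{v-1} h_{k_s, k_{s+1}} for j > i (where h_{p,q} = a_p^T a_q / ||a_q||_2^2), satisfies A_S = Ω A. -/

import Mathlib

open Matrix Filter

noncomputable def projMat {n : ℕ} (a : Fin n → ℝ) : Matrix (Fin n) (Fin n) ℝ :=
  1 - (a ⬝ᵥ a)⁻¹ • Matrix.vecMulVec a a

noncomputable def vnorm {n : ℕ} (x : Fin n → ℝ) : ℝ := Real.sqrt (x ⬝ᵥ x)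

/-- `x ∈ N(A)^⊥`: `x` is orthogonal to every vector of the null space of `A`. -/
def inNullPerp {m n : ℕ} (A : Matrix (Fin m) (Fin n) ℝ) (x : Fin n → ℝ) : Prop :=
  ∀ z : Fin n → ℝ, A.mulVec z = 0 → x ⬝ᵥ z = 0

/-- `P_k` (0-indexed): the projection onto the hyperplane orthogonal to row `k` of `A`. -/
noncomputable def Pnat {m n : ℕ} (A : Matrix (Fin m) (Fin n) ℝ) (k : ℕ) :
    Matrix (Fin n) (Fin n) ℝ :=
  if h : k < m then projMat (A ⟨k, h⟩) else 1

/-- descending product `f (lo+len-1) * ⋯ * f (lo+1) * f lo` -/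
noncomputable def prodDesc {α : Type*} [Monoid α] (f : ℕ → α) (lo : ℕ) : ℕ → α
  | 0 => 1
  | k + 1 => f (lo + k) * prodDesc f lo k

/-- ascending product `f lo * f (lo+1) * ⋯ * f (lo+len-1)` -/
noncomputable def prodAsc {α : Type*} [Monoid α] (f : ℕ → α) (lo : ℕ) : ℕ → α
  | 0 => 1
  | k + 1 => prodAsc f lo k * f (lo + k)

/-- `Q_j = P_m ⋯ P_{j+1}` (paper indices); here `j : Fin m` is 0-indexed. -/
noncomputable def Qmat {m n : ℕ} (A : Matrix (Fin m) (Fin n) ℝ) (j : Fin m) :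
    Matrix (Fin n) (Fin n) ℝ :=
  prodDesc (Pnat A) ((j : ℕ) + 1) (m - 1 - (j : ℕ))

/-- `Q = P_m P_{m-1} ⋯ P_1`. -/
noncomputable def Qfull {m n : ℕ} (A : Matrix (Fin m) (Fin n) ℝ) : Matrix (Fin n) (Fin n) ℝ :=
  prodDesc (Pnat A) 0 m

/-- `A_S = (Q_1 a_1, …, Q_m a_m)ᵀ`. -/
noncomputable def ASmat {m n : ℕ} (A : Matrix (Fin m) (Fin n) ℝ) : Matrix (Fin m) (Fin n) ℝ :=
  fun i => (Qmat A i).mulVec (A i)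

/-- `M = diag (1/‖a_1‖², …, 1/‖a_m‖²)`. -/
noncomputable def Mdiag {m n : ℕ} (A : Matrix (Fin m) (Fin n) ℝ) : Matrix (Fin m) (Fin m) ℝ :=
  Matrix.diagonal fun i => (A i ⬝ᵥ A i)⁻¹

/-- `Q̄_1 = Q̄_m = 0`, `Q̄_2 = I`, `Q̄_i = P_2 ⋯ P_{i-1}` (paper indices); `i : Fin m` 0-indexed. -/
noncomputable def barQmat {m n : ℕ} (A : Matrix (Fin m) (Fin n) ℝ) (i : Fin m) :
    Matrix (Fin n) (Fin n) ℝ :=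
  if (i : ℕ) = 0 ∨ (i : ℕ) = m - 1 then 0 else prodAsc (Pnat A) 1 ((i : ℕ) - 1)

/-- `Q̄ = P_2 P_3 ⋯ P_{m-1}`. -/
noncomputable def barQfull {m n : ℕ} (A : Matrix (Fin m) (Fin n) ℝ) : Matrix (Fin n) (Fin n) ℝ :=
  prodAsc (Pnat A) 1 (m - 2)

/-- `Ā_S = (Q̄_1 a_1, …, Q̄_m a_m)ᵀ`. -/
noncomputable def barASmat {m n : ℕ} (A : Matrix (Fin m) (Fin n) ℝ) : Matrix (Fin m) (Fin n) ℝ :=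
  fun i => (barQmat A i).mulVec (A i)

/-- `h_{p,q} = a_pᵀ a_q / ‖a_q‖²`. -/
noncomputable def hcoef {m n : ℕ} (A : Matrix (Fin m) (Fin n) ℝ) (p q : Fin m) : ℝ :=
  (A p ⬝ᵥ A q) / (A q ⬝ᵥ A q)

/-- The compatible matrix `Ω`: `ω_{ii} = 1`, `ω_{ij} = 0` for `j < i`, and for `j > i`
`ω_{ij} = Σ_{v=2}^{j-i+1} (-1)^{v-1} Σ_{chains i = k₁ < ⋯ < k_v = j} Π_s h_{k_s,k_{s+1}}`
(here the outer sum variable is shifted: `v = w + 2`, `w ∈ range (j - i)`). -/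
noncomputable def OmegaMat {m n : ℕ} (A : Matrix (Fin m) (Fin n) ℝ) :
    Matrix (Fin m) (Fin m) ℝ :=
  fun i j =>
    if i = j then 1
    else if j < i then 0
    else ∑ w ∈ Finset.range ((j : ℕ) - (i : ℕ)), (-1 : ℝ) ^ (w + 1) *
      ∑ c : Fin (w + 2) → Fin m,
        if (∀ s t : Fin (w + 2), s < t → c s < c t) ∧ c 0 = i ∧ c (Fin.last (w + 1)) = j
        then ∏ s : Fin (w + 1), hcoef A (c s.castSucc) (c s.succ) else 0

/-!
Let `N` be the strictly upper triangular part of `H`. Since `Q_{q-1} = Q_q P_q`, the identity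
`1 - Q_i = ∑_{q > i} Q_q (1 - P_q)` telescopes, and `(1 - P_q) a_i = h_{iq} a_q`; hence
`a_i = Q_i a_i + ∑_{q > i} h_{iq} Q_q a_q`, i.e. `A = (I + N) A_S`. The `(i, j)` entry of `N ^ k`
is the sum over increasing chains `i = k₁ < ⋯ < k_{k+1} = j` of products of the `h`'s, so
`Ω = ∑_{k < m} (-N) ^ k`, which is the inverse of `I + N` because `N ^ m = 0`.
-/

open Finset

namespace Matrix

variable {ι R : Type*}

theorem pow_apply_eq_sum_paths [Fintype ι] [DecidableEq ι] [CommSemiring R] (M : Matrix ι ι R)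
    (k : ℕ) (i j : ι) :
    (M ^ k) i j = ∑ c : Fin (k + 1) → ι,
      if c 0 = i ∧ c (Fin.last k) = j then ∏ s : Fin k, M (c s.castSucc) (c s.succ) else 0 := by
  induction k generalizing i with
  | zero =>
    rw [← (Equiv.funUnique (Fin 1) ι).symm.sum_comp]
    simp [one_apply, ite_and]
  | succ k ih =>
    rw [pow_succ', mul_apply, ← (Fin.consEquiv fun _ => ι).sum_comp, Fintype.sum_prod_type]
    simp only [ih, Finset.mul_sum]
    rw [Finset.sum_comm]
    simp [Fin.prod_univ_succ, ite_and]

def strictUpper [LT ι] [DecidableLT ι] [Zero R] (M : Matrix ι ι R) : Matrix ι ι R :=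
  fun p q => if p < q then M p q else 0

theorem strictUpper_pow_apply_eq_sum_chains [Fintype ι] [DecidableEq ι] [Preorder ι]
    [DecidableLT ι] [CommSemiring R] (M : Matrix ι ι R) (k : ℕ) (i j : ι) :
    (strictUpper M ^ k) i j = ∑ c : Fin (k + 1) → ι,
      if (∀ s t : Fin (k + 1), s < t → c s < c t) ∧ c 0 = i ∧ c (Fin.last k) = j
      then ∏ s : Fin k, M (c s.castSucc) (c s.succ) else 0 := by
  rw [pow_apply_eq_sum_paths]
  refine Finset.sum_congr rfl fun c _ => ?_
  have hmono : (∀ s t : Fin (k + 1), s < t → c s < c t) ↔ ∀ s : Fin k, c s.castSucc < c s.succ :=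
    Fin.strictMono_iff_lt_succ
  simp only [strictUpper, Fintype.prod_ite_zero, hmono, and_comm (a := ∀ s : Fin k, _), ite_and]
  congr

theorem strictUpper_pow_apply_eq_zero {m : ℕ} [CommSemiring R] (M : Matrix (Fin m) (Fin m) R)
    {k : ℕ} {i j : Fin m} (h : j < (i : ℕ) + k) : (strictUpper M ^ k) i j = 0 := by
  induction k generalizing j with
  | zero => exact one_apply_ne (by omega)
  | succ k ih =>
    rw [pow_succ, mul_apply]
    refine Finset.sum_eq_zero fun p _ => ?_
    by_cases hp : (p : ℕ) < i + k
    · rw [ih hp, zero_mul]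
    · rw [strictUpper, if_neg (by omega), mul_zero]

theorem strictUpper_pow_card {m : ℕ} [CommSemiring R] (M : Matrix (Fin m) (Fin m) R) :
    strictUpper M ^ m = 0 := by
  ext i j
  exact strictUpper_pow_apply_eq_zero M (by omega)

end Matrix

theorem one_sub_prodDesc {R : Type*} [Ring R] (f : ℕ → R) (lo L : ℕ) :
    1 - prodDesc f lo L
      = ∑ k ∈ Ico lo (lo + L), prodDesc f (k + 1) (lo + L - (k + 1)) * (1 - f k) := by
  induction L with
  | zero => simp [prodDesc]
  | succ L ih =>
    have hpeel : ∀ k ∈ Ico lo (lo + L), prodDesc f (k + 1) (lo + L + 1 - (k + 1))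
        = f (lo + L) * prodDesc f (k + 1) (lo + L - (k + 1)) := fun k hk => by
      rw [mem_Ico] at hk
      obtain ⟨d, hd⟩ : ∃ d, lo + L - (k + 1) = d := ⟨_, rfl⟩
      rw [show lo + L + 1 - (k + 1) = d + 1 by omega, prodDesc, hd,
        show k + 1 + d = lo + L by omega]
    rw [← add_assoc, sum_Ico_succ_top (by omega),
      sum_congr rfl fun k hk => by rw [hpeel k hk, mul_assoc], ← mul_sum, ← ih,
      Nat.sub_self, prodDesc, prodDesc]
    noncomm_ring

theorem one_sub_projMat_mulVec {n : ℕ} (a b : Fin n → ℝ) :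
    (1 - projMat a) *ᵥ b = ((b ⬝ᵥ a) / (a ⬝ᵥ a)) • a := by
  rw [projMat, sub_sub_cancel, smul_mulVec, vecMulVec_mulVec, op_smul_eq_smul, smul_smul,
    dotProduct_comm a b, div_eq_inv_mul]

section

variable {m n : ℕ} (A : Matrix (Fin m) (Fin n) ℝ)

theorem mul_transpose_mul_Mdiag_apply (p q : Fin m) : (A * Aᵀ * Mdiag A) p q = hcoef A p q := by
  rw [Mdiag, mul_diagonal, mul_apply]
  simp [hcoef, dotProduct, div_eq_mul_inv]

theorem OmegaMat_eq_geom_sum :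
    OmegaMat A = ∑ k ∈ range m, (-strictUpper (A * Aᵀ * Mdiag A)) ^ k := by
  ext i j
  have hsum : (∑ k ∈ range m, (-strictUpper (A * Aᵀ * Mdiag A)) ^ k) i j
      = ∑ k ∈ range m, (-1) ^ k * (strictUpper (A * Aᵀ * Mdiag A) ^ k) i j := by
    rw [Matrix.sum_apply]
    refine sum_congr rfl fun k _ => ?_
    rw [← neg_one_smul ℝ (strictUpper _), smul_pow, Matrix.smul_apply, smul_eq_mul]
  have hvanish : ∀ k, (j : ℕ) < i + k →
      (-1) ^ k * (strictUpper (A * Aᵀ * Mdiag A) ^ k) i j = 0 := fun k hk => by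
    rw [strictUpper_pow_apply_eq_zero _ hk, mul_zero]
  rw [hsum]
  rcases lt_trichotomy i j with hij | rfl | hji
  · have hsub : range (j - i + 1) ⊆ range m := range_subset_range.mpr (by omega)
    rw [← sum_subset hsub fun k _ hk => hvanish k (by simp at hk; omega), sum_range_succ',
      pow_zero, pow_zero, one_mul, one_apply_ne hij.ne, add_zero, OmegaMat, if_neg hij.ne,
      if_neg (not_lt.mpr hij.le)]
    refine sum_congr rfl fun w _ => ?_
    simp_rw [strictUpper_pow_apply_eq_sum_chains, mul_transpose_mul_Mdiag_apply]
  · rw [sum_eq_single 0 (fun k _ hk => hvanish k (by omega))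
      (fun h => absurd (mem_range.mpr i.pos) h)]
    simp [OmegaMat]
  · rw [sum_eq_zero fun k _ => hvanish k (by omega), OmegaMat, if_neg hji.ne', if_pos hji]

theorem OmegaMat_mul_one_add_strictUpper :
    OmegaMat A * (1 + strictUpper (A * Aᵀ * Mdiag A)) = 1 := by
  rw [OmegaMat_eq_geom_sum, ← sub_neg_eq_add, geom_sum_mul_neg, neg_pow, strictUpper_pow_card,
    mul_zero, sub_zero]

theorem sub_ASmat_eq_sum (i : Fin m) :
    A i - ASmat A i = ∑ q, strictUpper (A * Aᵀ * Mdiag A) i q • ASmat A q := by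
  set g : ℕ → Fin n → ℝ :=
    fun k => (prodDesc (Pnat A) (k + 1) (m - (k + 1)) * (1 - Pnat A k)) *ᵥ A i
  have htelescope : A i - ASmat A i = ∑ k ∈ Ico ((i : ℕ) + 1) m, g k := by
    rw [ASmat, show A i - Qmat A i *ᵥ A i = (1 - Qmat A i) *ᵥ A i by
      rw [sub_mulVec, one_mulVec], Qmat, one_sub_prodDesc,
      show (i : ℕ) + 1 + (m - 1 - i) = m by omega, sum_mulVec]
  have hIco : Ico ((i : ℕ) + 1) m = (range m).filter (fun k => (i : ℕ) < k) := by
    ext k; simp; omega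
  rw [htelescope, hIco, sum_filter,
    ← Fin.sum_univ_eq_sum_range (fun k => if (i : ℕ) < k then g k else 0)]
  refine sum_congr rfl fun q _ => ?_
  simp only [strictUpper, ← Fin.lt_def]
  split_ifs with hiq
  · have hP : Pnat A q = projMat (A q) := dif_pos q.isLt
    simp only [g]
    rw [← mulVec_mulVec, hP, one_sub_projMat_mulVec, mulVec_smul, ASmat, Qmat,
      mul_transpose_mul_Mdiag_apply, hcoef, show m - 1 - (q : ℕ) = m - (q + 1) by omega]
  · rw [zero_smul]

theorem one_add_strictUpper_mul_ASmat : (1 + strictUpper (A * Aᵀ * Mdiag A)) * ASmat A = A := by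
  ext i k
  have hrow := congrFun (sub_ASmat_eq_sum A i) k
  simp only [Pi.sub_apply, Finset.sum_apply, Pi.smul_apply, smul_eq_mul] at hrow
  rw [Matrix.add_mul, Matrix.one_mul, Matrix.add_apply, mul_apply, ← hrow, add_sub_cancel]

end

theorem stmt10_general {m n : ℕ} (A : Matrix (Fin m) (Fin n) ℝ) :
    ASmat A = OmegaMat A * A := by
  calc ASmat A = OmegaMat A * (1 + strictUpper (A * Aᵀ * Mdiag A)) * ASmat A := by
        rw [OmegaMat_mul_one_add_strictUpper, Matrix.one_mul]
    _ = OmegaMat A * A := by rw [Matrix.mul_assoc, one_add_strictUpper_mul_ASmat]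

/-- the explicit chain-sum matrix `Ω` satisfies `A_S = Ω A`. -/
theorem stmt10 {m n : ℕ} (A : Matrix (Fin m) (Fin n) ℝ) (hA : ∀ i, A i ≠ 0) :
    ASmat A = OmegaMat A * A :=
  stmt10_general A
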